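/- Let F/F_q be a function field, S ⊊ ℙ_F nonempty, H its holomorphy ring, d ≥ 2, and Q_1, ..., Q_t distinct places in S. The density of the set of tuples (h_0, ..., h_d) ∈ H^{d+1} that are NOT Eisenstein at any of Q_1, ..., Q_t equals ∏_{i=1}^t (1 − (q^{deg(Q_i)} − 1)²/q^{(d+2)deg(Q_i)}). -/

import Mathlib

/-- A model of an algebraic function field of one variable with full (finite) constant field
of cardinality `q`: a field `F`, a subfield `Fq` of constants with `q` elements, a family of
normalized discrete valuations (the places), degrees of places, the genus, and the dimension
`ℓ(D)` of the Riemann–Roch space of a divisor, together with the standard facts about these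
data (Riemann's theorem, `ℓ(D) ≤ deg D + 1`, `|L(D)| = q^{ℓ(D)}`, finiteness of zeros and
poles, and the zeta-function bound on the number of places of given degree). -/
structure FnField (q : ℕ) where
  /-- the function field -/
  F : Type
  [instField : Field F]
  /-- the field of constants -/
  Fq : Subfield F
  card_Fq : Nat.card Fq = q
  two_le_q : 2 ≤ q
  /-- the places -/
  Place : Type
  /-- the normalized additive valuation at each place (with junk value `0` at `0`) -/
  v : Place → F → ℤ
  v_zero : ∀ P, v P 0 = 0
  v_mul : ∀ P (x y : F), x ≠ 0 → y ≠ 0 → v P (x * y) = v P x + v P y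
  v_add : ∀ P (x y : F), x + y ≠ 0 → min (v P x) (v P y) ≤ v P (x + y)
  v_surj : ∀ P, ∃ x : F, x ≠ 0 ∧ v P x = 1
  v_const : ∀ P (c : Fq), (c : F) ≠ 0 → v P (c : F) = 0
  /-- a nonzero function has finitely many zeros and poles -/
  finite_supp : ∀ x : F, x ≠ 0 → {P : Place | v P x ≠ 0}.Finite
  /-- `Fq` is the full constant field -/
  full_const : ∀ x : F, x ≠ 0 → (∀ P, v P x = 0) → x ∈ Fq
  /-- the degree of a place -/
  deg : Place → ℕ
  deg_pos : ∀ P, 0 < deg P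
  /-- the genus -/
  genus : ℕ
  /-- the dimension `ℓ(D)` of the Riemann–Roch space `L(D)` over `Fq` -/
  ell : (Place →₀ ℤ) → ℕ
  /-- `L(D) = {f : v_P(f) ≥ -D(P) ∀P}` has exactly `q ^ ℓ(D)` elements -/
  card_RR : ∀ D : Place →₀ ℤ,
    Nat.card {f : F // f = 0 ∨ ∀ P, -(D P) ≤ v P f} = q ^ ell D
  /-- Riemann's theorem: `ℓ(D) = deg D + 1 - g` once `deg D ≥ 2g - 1` -/
  riemann : ∀ D : Place →₀ ℤ,
    2 * (genus : ℤ) - 1 ≤ D.sum (fun P n => n * (deg P : ℤ)) →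
    (ell D : ℤ) = D.sum (fun P n => n * (deg P : ℤ)) + 1 - genus
  /-- `ℓ(D) ≤ deg D + 1` for divisors of nonnegative degree -/
  ell_le : ∀ D : Place →₀ ℤ, 0 ≤ D.sum (fun P n => n * (deg P : ℤ)) →
    (ell D : ℤ) ≤ D.sum (fun P n => n * (deg P : ℤ)) + 1
  /-- the number of places of degree `n` is `O(q^n / n)` -/
  places_bound : ∃ c : ℝ, ∀ n : ℕ, 0 < n →
    (Nat.card {P : Place // deg P = n} : ℝ) ≤ c * q ^ n / n

namespace FnField

variable {q : ℕ} (X : FnField q)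

instance : Field X.F := X.instField

/-- the degree of a divisor -/
def degDiv (D : X.Place →₀ ℤ) : ℤ := D.sum fun P n => n * (X.deg P : ℤ)

/-- the Riemann–Roch space `L(D)` of a divisor `D` -/
def RR (D : X.Place →₀ ℤ) : Set X.F := {f | f = 0 ∨ ∀ P, -(D P) ≤ X.v P f}

/-- membership in (the maximal ideal of the holomorphy ring corresponding to) a place:
`x ∈ P` iff `v_P(x) ≥ 1`. -/
def mem1 (P : X.Place) (x : X.F) : Prop := x = 0 ∨ 1 ≤ X.v P x

/-- membership in the square of (the maximal ideal corresponding to) a place: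
`x ∈ P²` iff `v_P(x) ≥ 2`. -/
def mem2 (P : X.Place) (x : X.F) : Prop := x = 0 ∨ 2 ≤ X.v P x

/-- the holomorphy ring `H = ⋂_{P ∈ S} O_P` of a set of places `S` -/
def Hring (S : Set X.Place) : Set X.F := {x | ∀ P ∈ S, x = 0 ∨ 0 ≤ X.v P x}

/-- the directed set of positive divisors with support outside `S` -/
def Divisors (S : Set X.Place) : Type :=
  {D : X.Place →₀ ℤ // 0 ≤ D ∧ ∀ P ∈ D.support, P ∉ S}

noncomputable instance (S : Set X.Place) : Preorder (X.Divisors S) :=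
  Subtype.preorder _

end FnField

open FnField Filter

/-!
Once `deg D` is large the ratio is exactly constant. By Riemann's theorem, the functions of `L(D)`
with `v_{Qⱼ} ≥ aⱼ` for all `j` (`aⱼ ≤ 2`) form `L(D - ∑ aⱼ Qⱼ)`, which has `q^{ℓ(D)} ∏ⱼ rⱼ^{aⱼ}`
elements, `rⱼ = q^{-deg Qⱼ}`: such conditions at distinct places behave like independent events.
The indicator of "not Eisenstein at `Qⱼ`" is a signed sum of products, over the coefficients, of
such conditions, so the number of tuples factors as `q^{(d+1) ℓ(D)} ∏ⱼ (1 - rⱼ^d (1 - rⱼ)²)`.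
-/

theorem sum_piFinset_prod_sum_mul_prod {R Ω ι J K : Type*} [CommSemiring R]
    [Fintype ι] [DecidableEq ι] [Fintype J] [DecidableEq J] [Fintype K]
    (L : Finset Ω) (χ : J → ℕ → Ω → R) (C : R) (r : J → R) (N : ℕ)
    (hχ : ∀ e : J → ℕ, (∀ j, e j ≤ N) → ∑ x ∈ L, ∏ j, χ j (e j) x = C * ∏ j, r j ^ e j)
    (c : J → K → R) (α : J → K → ι → ℕ) (hα : ∀ j k i, α j k i ≤ N) :
    ∑ h ∈ Fintype.piFinset (fun _ : ι => L), ∏ j, ∑ k, c j k * ∏ i, χ j (α j k i) (h i) =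
      C ^ Fintype.card ι * ∏ j, ∑ k, c j k * r j ^ ∑ i, α j k i := by
  calc ∑ h ∈ Fintype.piFinset (fun _ : ι => L), ∏ j, ∑ k, c j k * ∏ i, χ j (α j k i) (h i)
      = ∑ w : J → K, (∏ j, c j (w j)) *
          ∑ h ∈ Fintype.piFinset (fun _ : ι => L), ∏ i, ∏ j, χ j (α j (w j) i) (h i) := by
        simp only [Fintype.prod_sum, Finset.mul_sum, Finset.prod_mul_distrib]
        rw [Finset.sum_comm]
        exact Finset.sum_congr rfl fun w _ => Finset.sum_congr rfl fun h _ => by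
          rw [Finset.prod_comm]
    _ = ∑ w : J → K, (∏ j, c j (w j)) * ∏ i : ι, (C * ∏ j, r j ^ α j (w j) i) := by
        refine Finset.sum_congr rfl fun w _ => ?_
        rw [← Finset.prod_univ_sum (fun _ => L) fun i x => ∏ j, χ j (α j (w j) i) x]
        exact congrArg _ (Finset.prod_congr rfl fun i _ => hχ _ fun j => hα j (w j) i)
    _ = ∑ w : J → K, C ^ Fintype.card ι * ∏ j, (c j (w j) * r j ^ ∑ i, α j (w j) i) := by
        refine Finset.sum_congr rfl fun w _ => ?_
        simp only [Finset.prod_mul_distrib, Finset.prod_const, Finset.card_univ,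
          ← Finset.prod_pow_eq_pow_sum]
        rw [Finset.prod_comm (s := Finset.univ (α := ι))]
        ring
    _ = C ^ Fintype.card ι * ∏ j, ∑ k, c j k * r j ^ ∑ i, α j k i := by
        rw [← Finset.mul_sum, Fintype.prod_sum]

namespace FnField

variable {q : ℕ} (X : FnField q)

def memN (n : ℕ) (P : X.Place) (x : X.F) : Prop := x = 0 ∨ (n : ℤ) ≤ X.v P x

def IsEisensteinAt {d : ℕ} (P : X.Place) (h : Fin (d + 1) → X.F) : Prop :=
  (∀ i : Fin (d + 1), (i : ℕ) < d → X.mem1 P (h i)) ∧ ¬ X.mem2 P (h 0) ∧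
    ¬ X.mem1 P (h (Fin.last d))

lemma degDiv_sub (D A : X.Place →₀ ℤ) : X.degDiv (D - A) = X.degDiv D - X.degDiv A :=
  Finsupp.sum_sub_index fun _ _ _ => sub_mul _ _ _

lemma degDiv_single (P : X.Place) (n : ℤ) : X.degDiv (Finsupp.single P n) = n * X.deg P :=
  Finsupp.sum_single_index (zero_mul _)

lemma degDiv_mono {D D' : X.Place →₀ ℤ} (h : D ≤ D') : X.degDiv D ≤ X.degDiv D' := by
  have : 0 ≤ X.degDiv (D' - D) :=
    Finset.sum_nonneg fun P _ => mul_nonneg (sub_nonneg.2 (h P)) (Nat.cast_nonneg _)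
  rw [degDiv_sub] at this
  linarith

lemma ell_eq_ell_sub_add_degDiv {D A : X.Place →₀ ℤ} (hA : 0 ≤ X.degDiv A)
    (hDA : 2 * (X.genus : ℤ) - 1 ≤ X.degDiv (D - A)) :
    (X.ell D : ℤ) = X.ell (D - A) + X.degDiv A := by
  have hD : 2 * (X.genus : ℤ) - 1 ≤ X.degDiv D := by rw [degDiv_sub] at hDA; linarith
  have h₁ := X.riemann D hD
  have h₂ := X.riemann (D - A) hDA
  rw [← degDiv, degDiv_sub] at h₂
  rw [← degDiv] at h₁
  linarith

lemma finite_RR (D : X.Place →₀ ℤ) : (X.RR D).Finite :=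
  Nat.finite_of_card_ne_zero <| (X.card_RR D).trans_ne <| pow_ne_zero _ (by linarith [X.two_le_q])

lemma RR_subset_Hring {S : Set X.Place} {D : X.Place →₀ ℤ} (hD : ∀ P ∈ S, D P = 0) :
    X.RR D ⊆ X.Hring S := by
  rintro f (rfl | hf) P hP
  · exact Or.inl rfl
  · exact Or.inr (by simpa [hD P hP] using hf P)

lemma memN_zero_of_mem_RR {D : X.Place →₀ ℤ} {P : X.Place} (hDP : D P = 0) {f : X.F}
    (hf : f ∈ X.RR D) : X.memN 0 P f := by
  rcases hf with rfl | hf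
  exacts [Or.inl rfl, Or.inr (by simpa [hDP] using hf P)]

lemma card_Hring_and {S : Set X.Place} {D : X.Place →₀ ℤ} (hD : ∀ P ∈ S, D P = 0) {n : ℕ}
    (p : (Fin n → X.F) → Prop) :
    Nat.card {h // (∀ i, h i ∈ X.Hring S) ∧ p h ∧ ∀ i, h i ∈ X.RR D} =
      Nat.card {h // p h ∧ ∀ i, h i ∈ X.RR D} :=
  Nat.card_congr <| Equiv.subtypeEquivRight fun _ =>
    ⟨fun ⟨_, hp, hL⟩ => ⟨hp, hL⟩, fun ⟨hp, hL⟩ => ⟨fun i => X.RR_subset_Hring hD (hL i), hp, hL⟩⟩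

lemma Divisors.apply_eq_zero {q : ℕ} {X : FnField q} {S : Set X.Place} (D : X.Divisors S)
    {P : X.Place} (hP : P ∈ S) : D.1 P = 0 :=
  Finsupp.notMem_support_iff.1 fun h => D.2.2 P h hP

lemma eventually_le_degDiv {S : Set X.Place} {P₀ : X.Place} (hP₀ : P₀ ∉ S) (n : ℤ) :
    ∀ᶠ D : X.Divisors S in atTop, n ≤ X.degDiv D.1 := by
  let D₀ : X.Divisors S := ⟨Finsupp.single P₀ n.toNat, Finsupp.single_nonneg.2 (by omega),
    fun P hP => Finset.mem_singleton.1 (Finsupp.support_single_subset hP) ▸ hP₀⟩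
  refine (eventually_ge_atTop D₀).mono fun D hD => le_trans ?_ (X.degDiv_mono hD)
  rw [degDiv_single]
  have := X.deg_pos P₀
  nlinarith [Int.self_le_toNat n]


section PrescribedZeros

variable {t : ℕ} {Q : Fin t → X.Place}

/-- The divisor `∑ⱼ aⱼ Qⱼ`. -/
noncomputable def placeSum (Q : Fin t → X.Place) (a : Fin t → ℕ) : X.Place →₀ ℤ :=
  Finsupp.mapDomain Q (Finsupp.equivFunOnFinite.symm fun j => (a j : ℤ))

lemma placeSum_apply_self (hQ : Function.Injective Q) (a : Fin t → ℕ) (j : Fin t) :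
    X.placeSum Q a (Q j) = a j := by
  rw [placeSum, Finsupp.mapDomain_apply hQ, Finsupp.coe_equivFunOnFinite_symm]

lemma placeSum_apply_of_notMem_range (a : Fin t → ℕ) {P : X.Place} (hP : P ∉ Set.range Q) :
    X.placeSum Q a P = 0 :=
  Finsupp.mapDomain_of_notMem_range _ _ hP

lemma degDiv_placeSum (a : Fin t → ℕ) :
    X.degDiv (X.placeSum Q a) = ∑ j, (a j : ℤ) * X.deg (Q j) := by
  rw [degDiv, placeSum, Finsupp.sum_mapDomain_index (fun _ => zero_mul _)
    (fun _ _ _ => add_mul _ _ _), Finsupp.sum_fintype _ _ (fun _ => zero_mul _)]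
  simp only [Finsupp.coe_equivFunOnFinite_symm]

lemma mem_RR_sub_placeSum_iff (hQ : Function.Injective Q) {D : X.Place →₀ ℤ}
    (hDQ : ∀ j, D (Q j) = 0) (a : Fin t → ℕ) {f : X.F} :
    f ∈ X.RR (D - X.placeSum Q a) ↔ f ∈ X.RR D ∧ ∀ j, X.memN (a j) (Q j) f := by
  rcases eq_or_ne f 0 with rfl | hf
  · simp [RR, memN]
  simp only [RR, memN, Set.mem_ofPred_eq, hf, false_or, Finsupp.sub_apply]
  constructor
  · intro h
    refine ⟨fun P => ?_, fun j => ?_⟩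
    · by_cases hP : P ∈ Set.range Q
      · obtain ⟨j, rfl⟩ := hP
        have := h (Q j)
        rw [X.placeSum_apply_self hQ, hDQ] at this
        rw [hDQ]
        omega
      · simpa [X.placeSum_apply_of_notMem_range a hP] using h P
    · simpa [X.placeSum_apply_self hQ, hDQ] using h (Q j)
  · rintro ⟨h, hQf⟩ P
    by_cases hP : P ∈ Set.range Q
    · obtain ⟨j, rfl⟩ := hP
      simpa [X.placeSum_apply_self hQ, hDQ] using hQf j
    · simpa [X.placeSum_apply_of_notMem_range a hP] using h P

lemma card_RR_memN_mul (hQ : Function.Injective Q) {D : X.Place →₀ ℤ}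
    (hDQ : ∀ j, D (Q j) = 0) (a : Fin t → ℕ)
    (hD : 2 * (X.genus : ℤ) - 1 ≤ X.degDiv D - ∑ j, (a j : ℤ) * X.deg (Q j)) :
    Nat.card {f // f ∈ X.RR D ∧ ∀ j, X.memN (a j) (Q j) f} * q ^ (∑ j, a j * X.deg (Q j)) =
      q ^ X.ell D := by
  have hell : X.ell D = X.ell (D - X.placeSum Q a) + ∑ j, a j * X.deg (Q j) := by
    have := X.ell_eq_ell_sub_add_degDiv (D := D) (A := X.placeSum Q a)
      (by rw [degDiv_placeSum]; positivity) (by rwa [degDiv_sub, degDiv_placeSum])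
    rw [degDiv_placeSum] at this
    exact_mod_cast this
  rw [Nat.card_congr (Equiv.subtypeEquivRight fun f => (X.mem_RR_sub_placeSum_iff hQ hDQ a).symm),
    hell, pow_add]
  exact congrArg (· * _) (X.card_RR _)

open scoped Classical in
lemma sum_RR_prod_indicator_memN (hQ : Function.Injective Q) {D : X.Place →₀ ℤ}
    (hDQ : ∀ j, D (Q j) = 0) (a : Fin t → ℕ)
    (hD : 2 * (X.genus : ℤ) - 1 ≤ X.degDiv D - ∑ j, (a j : ℤ) * X.deg (Q j)) :
    ∑ f ∈ (X.finite_RR D).toFinset, ∏ j, (if X.memN (a j) (Q j) f then 1 else 0 : ℝ) =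
      (q : ℝ) ^ X.ell D * ∏ j, ((q : ℝ) ^ X.deg (Q j))⁻¹ ^ a j := by
  have hq : (q : ℝ) ≠ 0 := by have := X.two_le_q; positivity
  have hcard := X.card_RR_memN_mul hQ hDQ a hD
  rw [Nat.subtype_card ((X.finite_RR D).toFinset.filter fun f => ∀ j, X.memN (a j) (Q j) f)
    (by simp)] at hcard
  simp only [Finset.prod_boole, Finset.mem_univ, true_imp_iff, ← Finset.natCast_card_filter]
  have hprod : ∏ j, ((q : ℝ) ^ X.deg (Q j))⁻¹ ^ a j = ((q : ℝ) ^ ∑ j, a j * X.deg (Q j))⁻¹ := by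
    rw [← Finset.prod_pow_eq_pow_sum, ← Finset.prod_inv_distrib]
    exact Finset.prod_congr rfl fun j _ => by rw [inv_pow, ← pow_mul, mul_comm]
  rw [hprod, eq_mul_inv_iff_mul_eq₀ (pow_ne_zero _ hq)]
  exact_mod_cast hcard

end PrescribedZeros

/- With `IsEisensteinAt P h = A ∧ ¬b ∧ ¬c`, expand `1 - 1_A (1 - 1_b) (1 - 1_c)`: besides the
constant term (index `none`), the term indexed by `some (β, γ)` is `-(-1)^(β + γ)` (`eisCoeff`)
times the indicator of `A ∧ (β → b) ∧ (γ → c)`, i.e. of `hᵢ ∈ P^(eisExp i)` for all `i`. -/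
def eisExp (d : ℕ) : Option (Bool × Bool) → Fin (d + 1) → ℕ
  | none, _ => 0
  | some (β, γ), i => (if (i : ℕ) < d then 1 else 0) + (if β ∧ (i : ℕ) = 0 then 1 else 0) +
      (if γ ∧ (i : ℕ) = d then 1 else 0)

lemma eisExp_le_two {d : ℕ} {k : Option (Bool × Bool)} {i : Fin (d + 1)} : eisExp d k i ≤ 2 := by
  rcases k with _ | ⟨β, γ⟩
  · exact zero_le_two
  · have := i.isLt
    simp only [eisExp]
    split_ifs <;> omega

def eisCoeff : Option (Bool × Bool) → ℝ
  | none => 1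
  | some (β, γ) => -(-1) ^ (β.toNat + γ.toNat)

lemma sum_eisExp_some (d : ℕ) (β γ : Bool) :
    ∑ i, eisExp d (some (β, γ)) i = d + β.toNat + γ.toNat := by
  simp only [eisExp, Finset.sum_add_distrib]
  congr 2
  · rw [Fin.sum_univ_castSucc]; simp
  · cases β <;> simp
  · rw [Fin.sum_univ_castSucc]; cases γ <;> simp [(Fin.is_lt _).ne]

lemma sum_eisCoeff_mul_inv_pow (d : ℕ) {x : ℝ} (hx : x ≠ 0) :
    ∑ k, eisCoeff k * x⁻¹ ^ ∑ i, eisExp d k i = 1 - (x - 1) ^ 2 / x ^ (d + 2) := by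
  simp only [Fintype.sum_option, Fintype.sum_prod_type, Fintype.sum_bool, sum_eisExp_some]
  simp only [eisCoeff, eisExp, Finset.sum_const_zero, pow_zero, inv_pow, Bool.toNat_true,
    Bool.toNat_false]
  field_simp
  ring

lemma memN_eisExp_some_iff {d : ℕ} (hd : 0 < d) (β γ : Bool) (i : Fin (d + 1)) {P : X.Place}
    {x : X.F} :
    X.memN (eisExp d (some (β, γ)) i) P x ↔ X.memN 0 P x ∧ ((i : ℕ) < d → X.mem1 P x) ∧
      (β ∧ (i : ℕ) = 0 → X.mem2 P x) ∧ (γ ∧ (i : ℕ) = d → X.mem1 P x) := by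
  rcases eq_or_ne x 0 with rfl | hx
  · simp [memN, mem1, mem2]
  simp only [memN, mem1, mem2, hx, false_or, eisExp]
  have := i.isLt
  cases β <;> cases γ <;>
    simp only [Bool.false_eq_true, false_and, true_and, if_false, false_imp_iff, and_true] <;>
    split_ifs <;> omega

lemma forall_memN_eisExp_some_iff {d : ℕ} (hd : 0 < d) (β γ : Bool) {P : X.Place}
    {h : Fin (d + 1) → X.F} (h₀ : ∀ i, X.memN 0 P (h i)) :
    (∀ i, X.memN (eisExp d (some (β, γ)) i) P (h i)) ↔
      (∀ i : Fin (d + 1), (i : ℕ) < d → X.mem1 P (h i)) ∧ (β → X.mem2 P (h 0)) ∧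
        (γ → X.mem1 P (h (Fin.last d))) := by
  simp only [X.memN_eisExp_some_iff hd, forall_and, h₀, true_and]
  refine and_congr Iff.rfl (and_congr ?_ ?_)
  · exact ⟨fun H hβ => H 0 ⟨hβ, rfl⟩, fun H i ⟨hβ, hi⟩ => (Fin.ext hi : i = 0) ▸ H hβ⟩
  · exact ⟨fun H hγ => H _ ⟨hγ, rfl⟩, fun H i ⟨hγ, hi⟩ => (Fin.ext hi : i = Fin.last d) ▸ H hγ⟩

open scoped Classical in
lemma indicator_not_isEisensteinAt_eq_sum {d : ℕ} (hd : 0 < d) {P : X.Place}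
    {h : Fin (d + 1) → X.F} (h₀ : ∀ i, X.memN 0 P (h i)) :
    (if ¬ X.IsEisensteinAt P h then 1 else 0 : ℝ) =
      ∑ k, eisCoeff k * ∏ i, if X.memN (eisExp d k i) P (h i) then 1 else 0 := by
  simp only [Fintype.sum_option, Fintype.sum_prod_type, Fintype.sum_bool, Finset.prod_boole,
    Finset.mem_univ, true_imp_iff, X.forall_memN_eisExp_some_iff hd _ _ h₀]
  simp only [eisExp, h₀, IsEisensteinAt, eisCoeff]
  by_cases hA : ∀ i : Fin (d + 1), (i : ℕ) < d → X.mem1 P (h i)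
  · simp only [eq_true hA]
    by_cases X.mem2 P (h 0) <;> by_cases X.mem1 P (h (Fin.last d)) <;> simp [*]
  · simp only [eq_false hA]
    simp

open scoped Classical in
lemma card_not_isEisensteinAt {d : ℕ} (hd : 0 < d) {t : ℕ} {Q : Fin t → X.Place}
    (hQ : Function.Injective Q) {D : X.Place →₀ ℤ} (hDQ : ∀ j, D (Q j) = 0)
    (hD : 2 * (X.genus : ℤ) - 1 + 2 * ∑ j, (X.deg (Q j) : ℤ) ≤ X.degDiv D) :
    (Nat.card {h : Fin (d + 1) → X.F // (∀ j, ¬ X.IsEisensteinAt (Q j) h) ∧ ∀ i, h i ∈ X.RR D}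
        : ℝ) =
      ((q : ℝ) ^ X.ell D) ^ (d + 1) *
        ∏ j, (1 - ((q : ℝ) ^ X.deg (Q j) - 1) ^ 2 / (q : ℝ) ^ ((d + 2) * X.deg (Q j))) := by
  set L := (X.finite_RR D).toFinset
  have hq : (q : ℝ) ≠ 0 := by have := X.two_le_q; positivity
  have hcount : ∀ a : Fin t → ℕ, (∀ j, a j ≤ 2) →
      ∑ f ∈ L, ∏ j, (if X.memN (a j) (Q j) f then 1 else 0 : ℝ) =
        (q : ℝ) ^ X.ell D * ∏ j, ((q : ℝ) ^ X.deg (Q j))⁻¹ ^ a j := fun a ha =>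
    X.sum_RR_prod_indicator_memN hQ hDQ a <| by
      have : ∑ j, (a j : ℤ) * X.deg (Q j) ≤ 2 * ∑ j, (X.deg (Q j) : ℤ) := by
        rw [Finset.mul_sum]
        exact Finset.sum_le_sum fun j _ => by gcongr; exact_mod_cast ha j
      linarith
  rw [Nat.subtype_card
      ((Fintype.piFinset fun _ => L).filter fun h => ∀ j, ¬ X.IsEisensteinAt (Q j) h)
      (by simp [L, and_comm]),
    Finset.natCast_card_filter]
  calc ∑ h ∈ Fintype.piFinset (fun _ => L), (if ∀ j, ¬ X.IsEisensteinAt (Q j) h then 1 else 0 : ℝ)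
      = ∑ h ∈ Fintype.piFinset (fun _ => L), ∏ j, ∑ k, eisCoeff k *
          ∏ i, (if X.memN (eisExp d k i) (Q j) (h i) then 1 else 0 : ℝ) := by
        refine Finset.sum_congr rfl fun h hh => ?_
        rw [show (if ∀ j, ¬ X.IsEisensteinAt (Q j) h then 1 else 0 : ℝ) =
            ∏ j, if ¬ X.IsEisensteinAt (Q j) h then 1 else 0 by convert Fintype.prod_boole.symm]
        exact Finset.prod_congr rfl fun j _ => X.indicator_not_isEisensteinAt_eq_sum hd
          fun i => X.memN_zero_of_mem_RR (hDQ j) <|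
            (X.finite_RR D).mem_toFinset.1 (Fintype.mem_piFinset.1 hh i)
    _ = ((q : ℝ) ^ X.ell D) ^ (d + 1) * ∏ j, ∑ k, eisCoeff k *
          ((q : ℝ) ^ X.deg (Q j))⁻¹ ^ ∑ i, eisExp d k i := by
        simpa using sum_piFinset_prod_sum_mul_prod L
          (fun j n f => if X.memN n (Q j) f then 1 else 0) _ _ 2 hcount
          (fun _ => eisCoeff) (fun _ => eisExp d) fun _ _ _ => eisExp_le_two
    _ = _ := by
        refine congrArg _ (Finset.prod_congr rfl fun j _ => ?_)
        rw [sum_eisCoeff_mul_inv_pow d (pow_ne_zero _ hq), ← pow_mul, mul_comm]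

end FnField

theorem density_not_locally_eisenstein_general
    {q : ℕ} (X : FnField q) (S : Set X.Place)
    (hSne : S ≠ Set.univ)
    (d : ℕ) (hd : 2 ≤ d) (t : ℕ) (Q : Fin t → X.Place)
    (hQinj : Function.Injective Q) (hQS : ∀ j, Q j ∈ S) :
    Filter.Tendsto
      (fun D : X.Divisors S =>
        ((Nat.card {h : Fin (d + 1) → X.F //
            (∀ i, h i ∈ X.Hring S) ∧
            (∀ j : Fin t, ¬ ((∀ i : Fin (d + 1), (i : ℕ) < d → X.mem1 (Q j) (h i)) ∧
              ¬ X.mem2 (Q j) (h 0) ∧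
              ¬ X.mem1 (Q j) (h ⟨d, Nat.lt_succ_self d⟩))) ∧
            (∀ i, h i ∈ X.RR D.1)}) : ℝ)
          / (q : ℝ) ^ ((d + 1) * X.ell D.1))
      Filter.atTop
      (nhds (∏ j, (1 - ((q : ℝ) ^ X.deg (Q j) - 1) ^ 2 /
        (q : ℝ) ^ ((d + 2) * X.deg (Q j))))) := by
  obtain ⟨P₀, hP₀⟩ := (Set.ne_univ_iff_exists_notMem S).mp hSne
  refine tendsto_const_nhds.congr' ?_
  filter_upwards [X.eventually_le_degDiv hP₀ (2 * X.genus - 1 + 2 * ∑ j, (X.deg (Q j) : ℤ))]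
    with D hD
  have hRR : ∀ P ∈ S, D.1 P = 0 := fun P hP => D.apply_eq_zero hP
  have hq : (q : ℝ) ≠ 0 := by have := X.two_le_q; positivity
  show _ = (Nat.card {h : Fin (d + 1) → X.F // (∀ i, h i ∈ X.Hring S) ∧
    (∀ j, ¬ X.IsEisensteinAt (Q j) h) ∧ ∀ i, h i ∈ X.RR D.1} : ℝ) / _
  rw [X.card_Hring_and hRR,
    X.card_not_isEisensteinAt (by omega) hQinj (fun j => hRR _ (hQS j)) hD, pow_mul',
    mul_div_cancel_left₀ _ (pow_ne_zero _ (pow_ne_zero _ hq))]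

/-- **Density of non-monic tuples not Eisenstein at any of `Q₁, …, Q_t` (Prop. 2).**
Let `F/F_q` be a function field, `S` a nonempty proper set of places, `H` its holomorphy
ring, `d ≥ 2`, and `Q₁, …, Q_t` distinct places in `S`.  A tuple `(h₀,…,h_d) ∈ H^{d+1}` is
Eisenstein at `Qⱼ` if `hᵢ ∈ Qⱼ` for `i < d`, `h₀ ∉ Qⱼ²` and `h_d ∉ Qⱼ`.  The Moore–Smith
limit over positive divisors `D` supported outside `S` of
`|{not Eisenstein at any Qⱼ} ∩ L(D)^{d+1}| / q^{(d+1) ℓ(D)}` equals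
`∏ⱼ (1 - (q^{deg Qⱼ} - 1)²/q^{(d+2) deg Qⱼ})`. -/
theorem density_not_locally_eisenstein
    {q : ℕ} (X : FnField q) (S : Set X.Place)
    (hS : S.Nonempty) (hSne : S ≠ Set.univ)
    (d : ℕ) (hd : 2 ≤ d) (t : ℕ) (Q : Fin t → X.Place)
    (hQinj : Function.Injective Q) (hQS : ∀ j, Q j ∈ S) :
    Filter.Tendsto
      (fun D : X.Divisors S =>
        ((Nat.card {h : Fin (d + 1) → X.F //
            (∀ i, h i ∈ X.Hring S) ∧
            (∀ j : Fin t, ¬ ((∀ i : Fin (d + 1), (i : ℕ) < d → X.mem1 (Q j) (h i)) ∧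
              ¬ X.mem2 (Q j) (h 0) ∧
              ¬ X.mem1 (Q j) (h ⟨d, Nat.lt_succ_self d⟩))) ∧
            (∀ i, h i ∈ X.RR D.1)}) : ℝ)
          / (q : ℝ) ^ ((d + 1) * X.ell D.1))
      Filter.atTop
      (nhds (∏ j, (1 - ((q : ℝ) ^ X.deg (Q j) - 1) ^ 2 /
        (q : ℝ) ^ ((d + 2) * X.deg (Q j))))) :=
  density_not_locally_eisenstein_general X S hSne d hd t Q hQinj hQS
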